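/- Let h(μ) = τ‖(A-μI)⁻¹b‖₁ + (1-τ)μ. If 0 ≤ τ ≤ min{β/‖A⁻¹b‖₁, β/(β - ‖(A-βI)⁻¹b‖₁)}, then h maps the interval [0, β] into itself. -/

import Mathlib

/-!
With `c = 1 + β - μ` we have `A - μI = cI - M`, and `c ∈ [1, 1 + β]` stays above `σ`, the
largest column sum of the nonnegative matrix `M`. There `cI - M` is inverse-positive, so for
`b ≥ 0` the quantity `S(c) = ‖(cI - M)⁻¹ b‖₁` is the plain coordinate sum of `(cI - M)⁻¹ b`.
Summing the resolvent identity `(aI - M)⁻¹ - (cI - M)⁻¹ = (c - a)(aI - M)⁻¹(cI - M)⁻¹` shows that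
`S` is convex and that `(c - σ) S(c)` is nondecreasing. Convexity bounds `h` above by the chord
through `h(0) = τ S(1 + β) ≤ β` and `h(β) = β - τ (β - S(1)) ≤ β`; the monotonicity gives
`β S(1 + β - μ) ≥ μ S(1)`, which together with `τ (β - S(1)) ≤ β` keeps `h` nonnegative.
-/

open Matrix Set

/-- ℓ¹ norm of a vector in ℝⁿ. -/
noncomputable def l1 {n : ℕ} (x : Fin n → ℝ) : ℝ := ∑ i, |x i|

/-- Induced operator 1-norm of a real matrix (maximum column sum). -/
noncomputable def op1 {n : ℕ} (A : Matrix (Fin n) (Fin n) ℝ) : ℝ := ⨆ j, ∑ i, |A i j|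

lemma sum_abs_le_op1 {n : ℕ} (A : Matrix (Fin n) (Fin n) ℝ) (j : Fin n) :
    ∑ i, |A i j| ≤ op1 A :=
  le_ciSup (f := fun j => ∑ i, |A i j|) (Finite.bddAbove_range _) j

lemma l1_eq_sum_of_nonneg {n : ℕ} {x : Fin n → ℝ} (hx : ∀ i, 0 ≤ x i) : l1 x = ∑ i, x i :=
  Finset.sum_congr rfl fun i _ => abs_of_nonneg (hx i)

section Resolvent

variable {ι : Type*} [Fintype ι] {M : Matrix ι ι ℝ} {σ : ℝ}

lemma sum_mulVec_le (hcol : ∀ j, ∑ i, M i j ≤ σ) {x : ι → ℝ} (hx : ∀ i, 0 ≤ x i) :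
    ∑ i, (M *ᵥ x) i ≤ σ * ∑ i, x i :=
  calc ∑ i, (M *ᵥ x) i = ∑ j, (∑ i, M i j) * x j := by
        simp only [mulVec, dotProduct, Finset.sum_mul]
        exact Finset.sum_comm
    _ ≤ ∑ j, σ * x j := Finset.sum_le_sum fun j _ => mul_le_mul_of_nonneg_right (hcol j) (hx j)
    _ = σ * ∑ j, x j := (Finset.mul_sum ..).symm

variable [DecidableEq ι]

lemma smul_one_sub_mulVec_apply (c : ℝ) (y : ι → ℝ) (i : ι) :
    ((c • (1 : Matrix ι ι ℝ) - M) *ᵥ y) i = c * y i - (M *ᵥ y) i := by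
  simp [sub_mulVec, smul_mulVec]

/-- The negative part `w` of `y` satisfies `c w ≤ M w`, which the column sum bound `σ < c`
only allows for `w = 0`. -/
lemma nonneg_of_smul_one_sub_mulVec_nonneg (hM : ∀ i j, 0 ≤ M i j)
    (hcol : ∀ j, ∑ i, M i j ≤ σ) {c : ℝ} (hc : σ < c) {y : ι → ℝ}
    (hy : ∀ i, 0 ≤ ((c • (1 : Matrix ι ι ℝ) - M) *ᵥ y) i) (i : ι) : 0 ≤ y i := by
  set w : ι → ℝ := fun i => max (-y i) 0
  have hw : ∀ i, 0 ≤ w i := fun i => le_max_right _ _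
  have hdom : ∀ i, c * w i ≤ (M *ᵥ w) i := by
    intro i
    rcases le_total 0 (y i) with hyi | hyi
    · rw [show w i = 0 from max_eq_right (neg_nonpos.2 hyi), mul_zero]
      exact Finset.sum_nonneg fun j _ => mul_nonneg (hM i j) (hw j)
    · have hneg : (M *ᵥ -y) i ≤ (M *ᵥ w) i :=
        Finset.sum_le_sum fun j _ => mul_le_mul_of_nonneg_left (le_max_left _ _) (hM i j)
      have := hy i
      rw [smul_one_sub_mulVec_apply, ← neg_le_neg_iff] at this
      simp only [mulVec_neg, Pi.neg_apply] at hneg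
      simp only [w, max_eq_left (neg_nonneg.2 hyi)]
      linarith
  have hsum : (c - σ) * ∑ i, w i ≤ 0 := by
    have := Finset.sum_le_sum fun i (_ : i ∈ Finset.univ) => hdom i
    rw [← Finset.mul_sum] at this
    linarith [sum_mulVec_le hcol hw]
  have hzero : ∑ i, w i = 0 :=
    le_antisymm (nonpos_of_mul_nonpos_right hsum (sub_pos.2 hc)) (Finset.sum_nonneg fun i _ => hw i)
  have := (Finset.sum_eq_zero_iff_of_nonneg fun i _ => hw i).1 hzero i (Finset.mem_univ _)
  simpa [w] using this

lemma isUnit_smul_one_sub (hM : ∀ i j, 0 ≤ M i j) (hcol : ∀ j, ∑ i, M i j ≤ σ) {c : ℝ}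
    (hc : σ < c) : IsUnit (c • (1 : Matrix ι ι ℝ) - M) := by
  have hle : ∀ {u v : ι → ℝ}, (c • 1 - M) *ᵥ u = (c • 1 - M) *ᵥ v → ∀ i, v i ≤ u i :=
    fun huv i => sub_nonneg.1 <| nonneg_of_smul_one_sub_mulVec_nonneg (y := _ - _) hM hcol hc
      (fun i => by rw [mulVec_sub, huv, sub_self]; rfl) i
  exact mulVec_injective_iff_isUnit.1 fun u v huv => funext fun i =>
    le_antisymm (hle huv.symm i) (hle huv i)

lemma smul_one_sub_mulVec_inv_mulVec (hM : ∀ i j, 0 ≤ M i j) (hcol : ∀ j, ∑ i, M i j ≤ σ)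
    {c : ℝ} (hc : σ < c) (x : ι → ℝ) :
    (c • (1 : Matrix ι ι ℝ) - M) *ᵥ ((c • 1 - M)⁻¹ *ᵥ x) = x := by
  rw [mulVec_mulVec, mul_nonsing_inv _ ((isUnit_iff_isUnit_det _).1
    (isUnit_smul_one_sub hM hcol hc)), one_mulVec]

lemma inv_mulVec_nonneg (hM : ∀ i j, 0 ≤ M i j) (hcol : ∀ j, ∑ i, M i j ≤ σ) {c : ℝ}
    (hc : σ < c) {x : ι → ℝ} (hx : ∀ i, 0 ≤ x i) :
    ∀ i, 0 ≤ ((c • (1 : Matrix ι ι ℝ) - M)⁻¹ *ᵥ x) i :=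
  nonneg_of_smul_one_sub_mulVec_nonneg hM hcol hc <| by
    rwa [smul_one_sub_mulVec_inv_mulVec hM hcol hc]

lemma inv_mulVec_eq_add (hM : ∀ i j, 0 ≤ M i j) (hcol : ∀ j, ∑ i, M i j ≤ σ) {a c : ℝ}
    (ha : σ < a) (hc : σ < c) (x : ι → ℝ) :
    (a • (1 : Matrix ι ι ℝ) - M)⁻¹ *ᵥ x = (c • (1 : Matrix ι ι ℝ) - M)⁻¹ *ᵥ x
      + (c - a) • ((a • (1 : Matrix ι ι ℝ) - M)⁻¹ *ᵥ ((c • 1 - M)⁻¹ *ᵥ x)) := by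
  have hunit : IsUnit (a • (1 : Matrix ι ι ℝ) - M) ↔ IsUnit (c • (1 : Matrix ι ι ℝ) - M) :=
    iff_of_true (isUnit_smul_one_sub hM hcol ha) (isUnit_smul_one_sub hM hcol hc)
  rw [← sub_eq_iff_eq_add', ← sub_mulVec, inv_sub_inv hunit, sub_sub_sub_cancel_right, ← sub_smul,
    Matrix.mul_smul, Matrix.mul_one, Matrix.smul_mul, smul_mulVec, mulVec_mulVec]

variable (M) in
/-- For `x ≥ 0` this is `‖(cI - M)⁻¹ x‖₁`. -/
noncomputable def resolventSum (c : ℝ) (x : ι → ℝ) : ℝ :=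
  ∑ i, ((c • (1 : Matrix ι ι ℝ) - M)⁻¹ *ᵥ x) i

lemma resolventSum_nonneg (hM : ∀ i j, 0 ≤ M i j) (hcol : ∀ j, ∑ i, M i j ≤ σ) {c : ℝ}
    (hc : σ < c) {x : ι → ℝ} (hx : ∀ i, 0 ≤ x i) : 0 ≤ resolventSum M c x :=
  Finset.sum_nonneg fun i _ => inv_mulVec_nonneg hM hcol hc hx i

lemma sub_mul_resolventSum_le (hM : ∀ i j, 0 ≤ M i j) (hcol : ∀ j, ∑ i, M i j ≤ σ) {c : ℝ}
    (hc : σ < c) {x : ι → ℝ} (hx : ∀ i, 0 ≤ x i) : (c - σ) * resolventSum M c x ≤ ∑ i, x i := by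
  set y := (c • (1 : Matrix ι ι ℝ) - M)⁻¹ *ᵥ x
  have hy : ∑ i, (c * y i - (M *ᵥ y) i) = ∑ i, x i := by
    simp only [← smul_one_sub_mulVec_apply, y, smul_one_sub_mulVec_inv_mulVec hM hcol hc]
  rw [Finset.sum_sub_distrib, ← Finset.mul_sum] at hy
  have := sum_mulVec_le hcol (inv_mulVec_nonneg hM hcol hc hx)
  rw [resolventSum]
  linarith

lemma resolventSum_eq_add (hM : ∀ i j, 0 ≤ M i j) (hcol : ∀ j, ∑ i, M i j ≤ σ) {a c : ℝ}
    (ha : σ < a) (hc : σ < c) (x : ι → ℝ) :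
    resolventSum M a x = resolventSum M c x
      + (c - a) * resolventSum M a ((c • (1 : Matrix ι ι ℝ) - M)⁻¹ *ᵥ x) := by
  simp only [resolventSum, inv_mulVec_eq_add hM hcol ha hc x, Pi.add_apply, Pi.smul_apply,
    smul_eq_mul, Finset.sum_add_distrib, Finset.mul_sum]

lemma resolventSum_antitone (hM : ∀ i j, 0 ≤ M i j) (hcol : ∀ j, ∑ i, M i j ≤ σ) {a c : ℝ}
    (ha : σ < a) (hac : a ≤ c) {x : ι → ℝ} (hx : ∀ i, 0 ≤ x i) :
    resolventSum M c x ≤ resolventSum M a x := by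
  rw [resolventSum_eq_add hM hcol ha (ha.trans_le hac) x, le_add_iff_nonneg_right]
  exact mul_nonneg (sub_nonneg.2 hac)
    (resolventSum_nonneg hM hcol ha (inv_mulVec_nonneg hM hcol (ha.trans_le hac) hx))

lemma sub_mul_resolventSum_monotone (hM : ∀ i j, 0 ≤ M i j) (hcol : ∀ j, ∑ i, M i j ≤ σ)
    {a c : ℝ} (ha : σ < a) (hac : a ≤ c) {x : ι → ℝ} (hx : ∀ i, 0 ≤ x i) :
    (a - σ) * resolventSum M a x ≤ (c - σ) * resolventSum M c x := by
  have hc := ha.trans_le hac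
  have hsplit := resolventSum_eq_add hM hcol hc ha x
  have hbound : (c - σ) * resolventSum M c _ ≤ resolventSum M a x :=
    sub_mul_resolventSum_le hM hcol hc (inv_mulVec_nonneg hM hcol ha hx)
  rw [hsplit]
  nlinarith

lemma resolventSum_le_chord (hM : ∀ i j, 0 ≤ M i j) (hcol : ∀ j, ∑ i, M i j ≤ σ)
    {a c d : ℝ} (ha : σ < a) (hac : a ≤ c) (hcd : c ≤ d) {x : ι → ℝ} (hx : ∀ i, 0 ≤ x i) :
    (d - a) * resolventSum M c x ≤ (d - c) * resolventSum M a x + (c - a) * resolventSum M d x := by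
  have hc := ha.trans_le hac
  have hd := hc.trans_le hcd
  have hy := inv_mulVec_nonneg hM hcol hd hx
  have hmono := resolventSum_antitone hM hcol ha hac hy
  rw [resolventSum_eq_add hM hcol ha hd x, resolventSum_eq_add hM hcol hc hd x]
  nlinarith [mul_nonneg (sub_nonneg.2 hcd) (sub_nonneg.2 (hac.trans hcd))]

lemma resolventSum_shift_bounds (hM : ∀ i j, 0 ≤ M i j) (hcol : ∀ j, ∑ i, M i j ≤ σ) {β μ : ℝ}
    (hσ1 : σ < 1) (hβ : β = 1 - σ) (hμ0 : 0 ≤ μ) (hμβ : μ ≤ β) {x : ι → ℝ} (hx : ∀ i, 0 ≤ x i) :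
    μ * resolventSum M 1 x ≤ β * resolventSum M (1 + β - μ) x ∧
      β * resolventSum M (1 + β - μ) x ≤
        μ * resolventSum M 1 x + (β - μ) * resolventSum M (1 + β) x := by
  constructor
  · have hmono := sub_mul_resolventSum_monotone (c := 1 + β - μ) hM hcol hσ1 (by linarith) hx
    have hnonneg := resolventSum_nonneg (c := 1 + β - μ) hM hcol (by linarith) hx
    rw [← hβ, show 1 + β - μ - σ = 2 * β - μ by linarith] at hmono
    nlinarith [sq_nonneg (β - μ)]
  · have hchord := resolventSum_le_chord (c := 1 + β - μ) (d := 1 + β) hM hcol hσ1 (by linarith)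
      (by linarith) hx
    ring_nf at hchord ⊢
    linarith

end Resolvent

lemma mem_Icc_of_between_chords {β μ y₀ y yβ : ℝ} (hβ : 0 < β) (hμ0 : 0 ≤ μ) (hμβ : μ ≤ β)
    (hy₀ : y₀ ≤ β) (hyβ : yβ ∈ Icc 0 β) (hlow : μ * yβ ≤ β * y)
    (hupp : β * y ≤ (β - μ) * y₀ + μ * yβ) : y ∈ Icc 0 β := by
  obtain ⟨hyβ0, hyββ⟩ := hyβ
  constructor
  · nlinarith [mul_nonneg hμ0 hyβ0]
  · nlinarith [mul_le_mul_of_nonneg_left hy₀ (sub_nonneg.2 hμβ), mul_le_mul_of_nonneg_left hyββ hμ0]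

theorem stmt_9_general {n : ℕ} (M : Matrix (Fin n) (Fin n) ℝ) (hM : ∀ i j, 0 ≤ M i j)
    (σ β : ℝ) (hσ : σ = op1 M) (hσ1 : σ < 1) (hβ : β = 1 - σ)
    (A : Matrix (Fin n) (Fin n) ℝ) (hA : A = (2 - σ) • (1 : Matrix (Fin n) (Fin n) ℝ) - M)
    (b : Fin n → ℝ) (hb : ∀ i, 0 ≤ b i) (hb1 : l1 b < β ^ 2)
    (τ : ℝ) (hτ0 : 0 ≤ τ)
    (hτ : τ ≤ min (β / l1 (A⁻¹.mulVec b)) (β / (β - l1 ((A - β • 1)⁻¹.mulVec b)))) :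
    ∀ μ ∈ Icc (0 : ℝ) β,
      τ * l1 ((A - μ • 1)⁻¹.mulVec b) + (1 - τ) * μ ∈ Icc (0 : ℝ) β := by
  rintro μ ⟨hμ0, hμβ⟩
  have hβ0 : 0 < β := by linarith
  have hcol : ∀ j, ∑ i, M i j ≤ σ := fun j => by
    simpa only [abs_of_nonneg (hM _ j), hσ] using sum_abs_le_op1 M j
  have hl1 : ∀ t ≤ β, l1 ((A - t • 1)⁻¹ *ᵥ b) = resolventSum M (1 + β - t) b := fun t ht => by
    rw [show A - t • 1 = (1 + β - t) • 1 - M by rw [hA, hβ, sub_right_comm, ← sub_smul]; ring_nf,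
      l1_eq_sum_of_nonneg (inv_mulVec_nonneg hM hcol (by linarith) hb)]
    rfl
  have h0 := hl1 0 hβ0.le
  rw [zero_smul, sub_zero, sub_zero] at h0
  rw [h0, hl1 β le_rfl, add_sub_cancel_right] at hτ
  rw [hl1 μ hμβ]
  have hS1 : β * resolventSum M 1 b < β * β := by
    have := sub_mul_resolventSum_le hM hcol hσ1 hb
    rw [← hβ, ← l1_eq_sum_of_nonneg hb] at this
    linarith
  have hτS0 := mul_le_of_le_div₀ hβ0.le (resolventSum_nonneg (c := 1 + β) hM hcol (by linarith) hb)
    (hτ.trans (min_le_left ..))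
  have hτS1 := mul_le_of_le_div₀ hβ0.le (by nlinarith) (hτ.trans (min_le_right ..))
  obtain ⟨hlow, hupp⟩ := resolventSum_shift_bounds hM hcol hσ1 hβ hμ0 hμβ hb
  exact mem_Icc_of_between_chords hβ0 hμ0 hμβ (y₀ := τ * resolventSum M (1 + β) b) hτS0
    (yβ := τ * resolventSum M 1 b + (1 - τ) * β) ⟨by nlinarith, by nlinarith⟩
    (by nlinarith) (by nlinarith)

/-- Lemma 11: for `0 ≤ τ ≤ min{β/‖A⁻¹b‖₁, β/(β - ‖(A-βI)⁻¹b‖₁)}`, the function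
`h(μ) = τ‖(A-μI)⁻¹b‖₁ + (1-τ)μ` maps `[0, β]` into itself. -/
theorem stmt_9 {n : ℕ} (M : Matrix (Fin n) (Fin n) ℝ) (hM : ∀ i j, 0 ≤ M i j)
    (σ β : ℝ) (hσ : σ = op1 M) (hσ1 : σ < 1) (hβ : β = 1 - σ)
    (A : Matrix (Fin n) (Fin n) ℝ) (hA : A = (2 - σ) • (1 : Matrix (Fin n) (Fin n) ℝ) - M)
    (b : Fin n → ℝ) (hb : ∀ i, 0 ≤ b i) (hb1 : l1 b < β ^ 2) (hb2 : l1 b + σ < 1)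
    (τ : ℝ) (hτ0 : 0 ≤ τ)
    (hτ : τ ≤ min (β / l1 (A⁻¹.mulVec b)) (β / (β - l1 ((A - β • 1)⁻¹.mulVec b)))) :
    ∀ μ ∈ Icc (0 : ℝ) β,
      τ * l1 ((A - μ • 1)⁻¹.mulVec b) + (1 - τ) * μ ∈ Icc (0 : ℝ) β :=
  stmt_9_general M hM σ β hσ hσ1 hβ A hA b hb hb1 τ hτ0 hτ
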